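/- For every natural number n ≥ 2, φ(n)²(ψ(n)+σ(n)) + ψ(n)²(φ(n)+σ(n)) + σ(n)²(φ(n)+ψ(n)) ≥ 6n³ + 6n² + 2n + 2. -/

import Mathlib

/-- The Dedekind psi function: ψ(p^a) = p^(a-1)(p+1), ψ(1) = 1, multiplicative. -/
def dpsi (n : ℕ) : ℕ := ∏ p ∈ n.primeFactors, p ^ (n.factorization p - 1) * (p + 1)

/-- Sum of divisors function. -/
def sigma1 (n : ℕ) : ℕ := ArithmeticFunction.sigma 1 n

/-!
Write `a = φ(n)`, `b = ψ(n)`, `c = σ(n)` and `n = ∏ p ^ k`. Factoring out `M = ∏ p ^ (k - 1)` gives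
`n = M ∏ p`, `a = M ∏ (p - 1)` and `b = M ∏ (p + 1)`, so `a + b ≥ 2n`; comparing Euler factors,
`p ^ (k - 1) (p + 1) ≤ 1 + p + ⋯ + p ^ k` gives `b ≤ c`; and `a ≤ n - 1`. Under these constraints the
symmetric cubic `a²(b + c) + b²(a + c) + c²(a + b)` is increasing in `c`, then in `b`, and then as `a`
decreases, so it is smallest at `a = n - 1`, `b = c = n + 1` (the values at a prime), where it equals
`6n³ + 6n² + 2n + 2`.
-/

open Finset

theorem Finset.two_mul_prod_le_prod_sub_one_add_prod_add_one {ι : Type*} (s : Finset ι)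
    (f : ι → ℕ) : 2 * ∏ i ∈ s, f i ≤ ∏ i ∈ s, (f i - 1) + ∏ i ∈ s, (f i + 1) := by
  classical
  induction s using Finset.induction_on with
  | empty => simp
  | insert j s hj ih =>
    simp only [prod_insert hj]
    have hle : ∏ i ∈ s, (f i - 1) ≤ ∏ i ∈ s, (f i + 1) :=
      prod_le_prod' fun i _ => by omega
    obtain h0 | ⟨x, hx⟩ : f j = 0 ∨ ∃ x, f j = x + 1 := by
      cases f j <;> simp
    · simp [h0]
    · rw [hx, Nat.add_sub_cancel]
      -- `x (A + B) ≤ (x - 1) A + (x + 1) B` as soon as `A ≤ B`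
      nlinarith

theorem Nat.pow_mul_succ_le_sum_range_pow (p k : ℕ) :
    p ^ k * (p + 1) ≤ ∑ i ∈ range (k + 2), p ^ i := by
  rw [sum_range_succ, sum_range_succ, mul_add_one, ← pow_succ]
  omega

theorem Nat.prod_primeFactors_pow_pred_mul_self {n : ℕ} (hn : n ≠ 0) :
    ∏ p ∈ n.primeFactors, p ^ (n.factorization p - 1) * p = n := by
  conv_rhs => rw [← Nat.prod_factorization_pow_eq_self hn, Finsupp.prod, Nat.support_factorization]
  refine prod_congr rfl fun p hp => ?_
  rw [← pow_succ, Nat.sub_add_cancel (Nat.pos_of_ne_zero (Finsupp.mem_support_iff.1 hp))]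

theorem two_mul_le_totient_add_dpsi {n : ℕ} (hn : n ≠ 0) : 2 * n ≤ n.totient + dpsi n := by
  set M := ∏ p ∈ n.primeFactors, p ^ (n.factorization p - 1)
  have hφ : n.totient = M * ∏ p ∈ n.primeFactors, (p - 1) := by
    rw [Nat.totient_eq_prod_factorization hn, ← prod_mul_distrib]; rfl
  have hψ : dpsi n = M * ∏ p ∈ n.primeFactors, (p + 1) := by
    rw [dpsi, ← prod_mul_distrib]
  have hn' : n = M * ∏ p ∈ n.primeFactors, p := by
    rw [← prod_mul_distrib, Nat.prod_primeFactors_pow_pred_mul_self hn]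
  calc 2 * n = M * (2 * ∏ p ∈ n.primeFactors, p) := by rw [mul_left_comm, ← hn']
    _ ≤ M * (∏ p ∈ n.primeFactors, (p - 1) + ∏ p ∈ n.primeFactors, (p + 1)) :=
      Nat.mul_le_mul_left _ (two_mul_prod_le_prod_sub_one_add_prod_add_one _ _)
    _ = n.totient + dpsi n := by rw [hφ, hψ, mul_add]

theorem dpsi_le_sigma1 {n : ℕ} (hn : n ≠ 0) : dpsi n ≤ sigma1 n := by
  rw [dpsi, sigma1, ArithmeticFunction.sigma_one_apply, Nat.sum_divisors hn]
  refine prod_le_prod' fun p hp => ?_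
  have hk : 0 < n.factorization p := Nat.pos_of_ne_zero (Finsupp.mem_support_iff.1 hp)
  calc p ^ (n.factorization p - 1) * (p + 1)
      ≤ ∑ i ∈ range (n.factorization p - 1 + 2), p ^ i := Nat.pow_mul_succ_le_sum_range_pow _ _
    _ = ∑ i ∈ range (n.factorization p + 1), p ^ i := by rw [← Nat.sub_add_comm hk]; rfl

theorem symmetric_cubic_ge_of_two_mul_le {R : Type*} [CommRing R] [LinearOrder R]
    [IsStrictOrderedRing R] {n a b c : R} (hn : 0 ≤ n) (ha : a + 1 ≤ n) (hbc : b ≤ c)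
    (hab : 2 * n ≤ a + b) :
    a ^ 2 * (b + c) + b ^ 2 * (a + c) + c ^ 2 * (a + b) ≥ 6 * n ^ 3 + 6 * n ^ 2 + 2 * n + 2 := by
  calc 6 * n ^ 3 + 6 * n ^ 2 + 2 * n + 2 ≤ 2 * (2 * n - a) * ((n - a) ^ 2 + 3 * n ^ 2) := by
        nlinarith [sq_nonneg (n - a), mul_nonneg hn (sub_nonneg.2 ha)]
    _ ≤ 2 * b * (a ^ 2 + a * b + b ^ 2) := by
        nlinarith [mul_nonneg (sub_nonneg.2 hab) (add_nonneg (add_nonneg (sq_nonneg (a + b))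
          (sq_nonneg (2 * n))) (sq_nonneg (b + 2 * n - a)))]
    _ ≤ a ^ 2 * (b + c) + b ^ 2 * (a + c) + c ^ 2 * (a + b) := by
        nlinarith [mul_nonneg (sub_nonneg.2 hbc) (add_nonneg (add_nonneg (sq_nonneg a) (sq_nonneg b))
          (mul_nonneg (by linarith : (0 : R) ≤ c + b) (by linarith : (0 : R) ≤ a + b)))]

theorem stmt3 (n : ℕ) (hn : 2 ≤ n) :
    n.totient ^ 2 * (dpsi n + sigma1 n) + dpsi n ^ 2 * (n.totient + sigma1 n) +
      sigma1 n ^ 2 * (n.totient + dpsi n) ≥ 6 * n ^ 3 + 6 * n ^ 2 + 2 * n + 2 := by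
  have hn0 : n ≠ 0 := by omega
  have hφ : n.totient + 1 ≤ n := Nat.totient_lt n (by omega)
  have hψσ : dpsi n ≤ sigma1 n := dpsi_le_sigma1 hn0
  have hφψ : 2 * n ≤ n.totient + dpsi n := two_mul_le_totient_add_dpsi hn0
  exact_mod_cast symmetric_cubic_ge_of_two_mul_le (n := (n : ℤ)) (a := n.totient) (b := dpsi n)
    (c := sigma1 n) (Nat.cast_nonneg n) (by exact_mod_cast hφ) (by exact_mod_cast hψσ)
    (by exact_mod_cast hφψ)
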